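/- For a 2×2 real matrix X of coordinates, the 1-form A = (1+XᵗX)⁻¹ Xᵗ dX transformed by the gauge transformation g = (1+XᵗX)^{−1/2} (i.e., g⁻¹Ag + g⁻¹dg) takes values in the Lie algebra o(2) of antisymmetric 2×2 real matrices, pointwise. -/

import Mathlib

open Matrix

/-- ℝ⁴ identified with M₂(ℝ) via coordinates x (i,j) = x_{ij}. -/
abbrev E : Type := Fin 2 × Fin 2 → ℝ

/-- Partial derivative with respect to the coordinate x_p. -/
noncomputable def pder (p : Fin 2 × Fin 2) (f : E → ℝ) (x : E) : ℝ :=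
  deriv (fun t : ℝ => f (x + t • (Pi.single p (1 : ℝ) : E))) 0

/-- The coordinate matrix X. -/
def Xof (x : E) : Matrix (Fin 2) (Fin 2) ℝ := Matrix.of fun i j => x (i, j)

/-- The dx_p-component of the connection potential A = (1+XᵗX)⁻¹ Xᵗ dX. -/
noncomputable def Apot (p : Fin 2 × Fin 2) (x : E) : Matrix (Fin 2) (Fin 2) ℝ :=
  (1 + (Xof x)ᵀ * Xof x)⁻¹ * (Xof x)ᵀ * Matrix.single p.1 p.2 (1 : ℝ)

/-! Write S = 1 + XᵀX, so that g² = S⁻¹ and g⁻¹ = gS. The gauge term then symmetrises to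
g⁻¹Ag + (g⁻¹Ag)ᵀ = g (dXᵀ X + Xᵀ dX) g = g dS g. Differentiating g·g·S = 1 gives
dg·g + g·dg = -g² dS g², hence g⁻¹dg + (g⁻¹dg)ᵀ = g⁻¹(dg·g + g·dg)g⁻¹ = -g dS g, and the two
cancel. -/

section GaugeAlgebra

variable {n R : Type*} [Fintype n] [DecidableEq n] [CommRing R]

noncomputable def gaugeTransform (g a dg : Matrix n n R) : Matrix n n R := g⁻¹ * a * g + g⁻¹ * dg

variable {G S : Matrix n n R}

theorem conj_inv_mul_transpose_mul_add_transpose (hGGS : G * G * S = 1) (hG : Gᵀ = G)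
    (X V : Matrix n n R) :
    G⁻¹ * (S⁻¹ * Xᵀ * V) * G + (G⁻¹ * (S⁻¹ * Xᵀ * V) * G)ᵀ = G * (Vᵀ * X + Xᵀ * V) * G := by
  have hGinv : G⁻¹ = G * S := inv_eq_right_inv (by rw [← mul_assoc, hGGS])
  have hSGG : S * (G * G) = 1 := mul_eq_one_comm.mp hGGS
  have hconj : G⁻¹ * (S⁻¹ * Xᵀ * V) * G = G * Xᵀ * V * G := by
    rw [hGinv, inv_eq_left_inv hGGS]
    calc G * S * (G * G * Xᵀ * V) * G = G * (S * (G * G)) * Xᵀ * V * G := by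
          simp only [mul_assoc]
      _ = G * Xᵀ * V * G := by rw [hSGG, mul_one]
  rw [hconj]
  simp only [transpose_mul, transpose_transpose, hG, mul_add, add_mul, mul_assoc]
  exact add_comm _ _

theorem inv_mul_add_transpose (hGGS : G * G * S = 1) (hG : Gᵀ = G) {D W : Matrix n n R}
    (hD : Dᵀ = D) (hderiv : (D * G + G * D) * S + G * G * W = 0) :
    G⁻¹ * D + (G⁻¹ * D)ᵀ = -(G * W * G) := by
  have hG_det : IsUnit G.det := isUnit_det_of_right_inverse (by rw [← mul_assoc, hGGS])
  have hGiG : G⁻¹ * G = 1 := nonsing_inv_mul G hG_det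
  have hGGi : G * G⁻¹ = 1 := mul_nonsing_inv G hG_det
  have hSGG : S * (G * G) = 1 := mul_eq_one_comm.mp hGGS
  have hsum : D * G + G * D = -(G * G * W * (G * G)) := by
    rw [eq_neg_iff_add_eq_zero]
    calc D * G + G * D + G * G * W * (G * G) = ((D * G + G * D) * S + G * G * W) * (G * G) := by
          simp only [add_mul, mul_assoc, hSGG, mul_one]
      _ = 0 := by rw [hderiv, zero_mul]
  rw [transpose_mul, hD, transpose_nonsing_inv, hG]
  calc G⁻¹ * D + D * G⁻¹ = G⁻¹ * (D * G + G * D) * G⁻¹ := by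
        simp only [mul_add, add_mul, mul_assoc, hGGi, mul_one]
        rw [← mul_assoc G⁻¹ G, hGiG, one_mul]
    _ = -(G⁻¹ * G * G * W * G * (G * G⁻¹)) := by rw [hsum]; simp only [mul_neg, neg_mul, mul_assoc]
    _ = -(G * W * G) := by rw [hGiG, hGGi, one_mul, mul_one]

theorem gaugeTransform_add_transpose_eq_zero (hGGS : G * G * S = 1) (hG : Gᵀ = G)
    {X V D : Matrix n n R} (hD : Dᵀ = D)
    (hderiv : (D * G + G * D) * S + G * G * (Vᵀ * X + Xᵀ * V) = 0) :
    gaugeTransform G (S⁻¹ * Xᵀ * V) D + (gaugeTransform G (S⁻¹ * Xᵀ * V) D)ᵀ = 0 := by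
  rw [gaugeTransform, transpose_add, add_add_add_comm,
    conj_inv_mul_transpose_mul_add_transpose hGGS hG, inv_mul_add_transpose hGGS hG hD hderiv,
    add_neg_cancel]

end GaugeAlgebra

theorem isUnit_det_one_add_transpose_mul_self {m n : Type*} [Fintype m] [Fintype n]
    [DecidableEq n] (X : Matrix m n ℝ) : IsUnit (1 + Xᵀ * X).det := by
  have hX := posSemidef_conjTranspose_mul_self X
  rw [conjTranspose_eq_transpose_of_trivial] at hX
  exact (PosDef.one.add_posSemidef hX).det_pos.ne'.isUnit

noncomputable def pderMatrix {n : Type*} (p : Fin 2 × Fin 2) (g : E → Matrix n n ℝ) (x : E) :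
    Matrix n n ℝ :=
  of fun i j => pder p (fun y => g y i j) x

theorem pderMatrix_transpose {n : Type*} {g : E → Matrix n n ℝ} (hg : ∀ x, (g x)ᵀ = g x)
    (p : Fin 2 × Fin 2) (x : E) : (pderMatrix p g x)ᵀ = pderMatrix p g x := by
  ext i j
  show pder p (fun y => g y j i) x = pder p (fun y => g y i j) x
  congr 1
  funext y
  exact congrFun (congrFun (hg y) i) j

theorem Xof_add_smul_single (x : E) (p : Fin 2 × Fin 2) (t : ℝ) :
    Xof (x + t • Pi.single p 1) = Xof x + t • single p.1 p.2 1 := by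
  ext i j
  simp [Xof, Pi.single_apply, single_apply, Prod.ext_iff, eq_comm]

section Calculus

-- Any submultiplicative norm would do: it makes matrices a normed algebra for the product rule.
open scoped Matrix.Norms.Operator

theorem Matrix.hasDerivAt_of_hasDerivAt_apply {𝕜 m n : Type*} [NontriviallyNormedField 𝕜]
    [Fintype m] [Fintype n] [DecidableEq m] [DecidableEq n] {f : 𝕜 → Matrix m n 𝕜}
    {f' : Matrix m n 𝕜} {t : 𝕜} (h : ∀ i j, HasDerivAt (fun s => f s i j) (f' i j) t) :
    HasDerivAt f f' t := by
  have hsum : HasDerivAt (fun s => ∑ i, ∑ j, f s i j • single i j (1 : 𝕜))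
      (∑ i, ∑ j, f' i j • single i j (1 : 𝕜)) t :=
    HasDerivAt.fun_sum fun i _ => HasDerivAt.fun_sum fun j _ => (h i j).smul_const _
  simpa only [smul_single, smul_eq_mul, mul_one, ← matrix_eq_sum_single] using hsum

theorem HasDerivAt.mul_self_mul_eq_zero_of_forall_eq {𝕜 𝔸 : Type*} [NontriviallyNormedField 𝕜]
    [NormedRing 𝔸] [NormedAlgebra 𝕜 𝔸] {c d : 𝕜 → 𝔸} {c' d' a : 𝔸} {x : 𝕜}
    (hc : HasDerivAt c c' x) (hd : HasDerivAt d d' x) (h : ∀ t, c t * c t * d t = a) :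
    (c' * c x + c x * c') * d x + c x * c x * d' = 0 := by
  have hconst : HasDerivAt (fun t => c t * c t * d t) 0 x := by
    simp only [h]; exact hasDerivAt_const x a
  exact ((hc.mul hc).mul hd).unique hconst

theorem hasDerivAt_one_add_transpose_mul_self_add_smul {𝕜 n : Type*} [NontriviallyNormedField 𝕜]
    [Fintype n] [DecidableEq n] (X V : Matrix n n 𝕜) (t : 𝕜) :
    HasDerivAt (fun s : 𝕜 => 1 + (X + s • V)ᵀ * (X + s • V))
      (Vᵀ * (X + t • V) + (X + t • V)ᵀ * V) t := by
  have hline (W U : Matrix n n 𝕜) : HasDerivAt (fun s : 𝕜 => W + s • U) U t := by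
    have := ((hasDerivAt_id t).smul_const U).const_add W
    rwa [one_smul] at this
  simp only [transpose_add, transpose_smul]
  exact ((hline Xᵀ Vᵀ).mul (hline X V)).const_add 1

theorem hasDerivAt_pderMatrix {n : Type*} [Fintype n] [DecidableEq n] {g : E → Matrix n n ℝ}
    (hg : ∀ i j, Differentiable ℝ fun y => g y i j) (p : Fin 2 × Fin 2) (x : E) :
    HasDerivAt (fun t : ℝ => g (x + t • Pi.single p 1)) (pderMatrix p g x) 0 :=
  Matrix.hasDerivAt_of_hasDerivAt_apply fun i j =>
    ((hg i j).differentiableAt.comp 0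
      ((differentiable_id.smul_const _).const_add x).differentiableAt).hasDerivAt

theorem pder_mul_self_mul_one_add_transpose_mul_self {g : E → Matrix (Fin 2) (Fin 2) ℝ}
    (hg : ∀ i j, Differentiable ℝ fun y => g y i j)
    (hGGS : ∀ y, g y * g y * (1 + (Xof y)ᵀ * Xof y) = 1) (p : Fin 2 × Fin 2) (x : E) :
    (pderMatrix p g x * g x + g x * pderMatrix p g x) * (1 + (Xof x)ᵀ * Xof x) +
      g x * g x * ((single p.1 p.2 1)ᵀ * Xof x + (Xof x)ᵀ * single p.1 p.2 1) = 0 := by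
  have h := (hasDerivAt_pderMatrix hg p x).mul_self_mul_eq_zero_of_forall_eq
    (hasDerivAt_one_add_transpose_mul_self_add_smul (Xof x) (single p.1 p.2 1) 0)
    fun t => by rw [← Xof_add_smul_single]; exact hGGS _
  simpa only [zero_smul, add_zero] using h

end Calculus

theorem gauge_transformed_potential_in_o2_general
    (g : E → Matrix (Fin 2) (Fin 2) ℝ)
    (hsymm : ∀ x, (g x)ᵀ = g x)
    (hsq : ∀ x, g x * g x = (1 + (Xof x)ᵀ * Xof x)⁻¹)
    (hdiff : ∀ i j : Fin 2, Differentiable ℝ (fun x : E => g x i j)) :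
    ∀ (x : E) (p : Fin 2 × Fin 2),
      ((g x)⁻¹ * Apot p x * g x +
          (g x)⁻¹ * Matrix.of (fun i j => pder p (fun y => g y i j) x)) +
        ((g x)⁻¹ * Apot p x * g x +
          (g x)⁻¹ * Matrix.of (fun i j => pder p (fun y => g y i j) x))ᵀ = 0 := by
  intro x p
  have hGGS (y : E) : g y * g y * (1 + (Xof y)ᵀ * Xof y) = 1 := by
    rw [hsq y]
    exact nonsing_inv_mul _ (isUnit_det_one_add_transpose_mul_self (Xof y))
  exact gaugeTransform_add_transpose_eq_zero (hGGS x) (hsymm x) (pderMatrix_transpose hsymm p x)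
    (pder_mul_self_mul_one_add_transpose_mul_self hdiff hGGS p x)

/-- If g is the (positive-definite, symmetric) square root of (1+XᵗX)⁻¹, then each
    dx_p-component of g⁻¹Ag + g⁻¹dg is an antisymmetric matrix, i.e. lies in o(2). -/
theorem gauge_transformed_potential_in_o2
    (g : E → Matrix (Fin 2) (Fin 2) ℝ)
    (hpos : ∀ x, (g x).PosDef)
    (hsymm : ∀ x, (g x)ᵀ = g x)
    (hsq : ∀ x, g x * g x = (1 + (Xof x)ᵀ * Xof x)⁻¹)
    (hdiff : ∀ i j : Fin 2, Differentiable ℝ (fun x : E => g x i j)) :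
    ∀ (x : E) (p : Fin 2 × Fin 2),
      ((g x)⁻¹ * Apot p x * g x +
          (g x)⁻¹ * Matrix.of (fun i j => pder p (fun y => g y i j) x)) +
        ((g x)⁻¹ * Apot p x * g x +
          (g x)⁻¹ * Matrix.of (fun i j => pder p (fun y => g y i j) x))ᵀ = 0 :=
  gauge_transformed_potential_in_o2_general g hsymm hsq hdiff
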